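/- Let 2 ≤ dA ≤ dB and d = dA·dB. No complete set of d+1 pairwise mutually unbiased orthonormal bases of EuclideanSpace ℂ (Fin dA × Fin dB) can consist entirely of maximally entangled states: in any such complete set at least one basis vector ψ satisfies P(ψ) ≠ 1/dA. -/

import Mathlib

/-- Purity of the reduced density operator on subsystem `A`. -/
noncomputable def purity {dA dB : ℕ} (ψ : EuclideanSpace ℂ (Fin dA × Fin dB)) : ℝ :=
  ∑ a : Fin dA, ∑ a' : Fin dA,
    ‖∑ b : Fin dB, ψ (a, b) * (starRingEnd ℂ) (ψ (a', b))‖ ^ 2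

/-!
A complete set of MUBs in dimension `d` is a complex projective 2-design: its `d(d+1)` vectors
have frame potential `∑ |⟨ψ, ψ'⟩|⁴ = 2d(d+1)`, which is exactly the value for which
`‖∑ |ψ⊗ψ⟩⟨ψ⊗ψ| - (I + SWAP)‖²` vanishes, so `∑ |ψ⊗ψ⟩⟨ψ⊗ψ| = I + SWAP`.

The purity of `ψ` is the expectation of the partial swap `SWAP_A ⊗ I_B` in `ψ ⊗ ψ`, so its sum
over the design is `tr ((SWAP_A ⊗ I_B) (I + SWAP)) = dA² dB + dA dB²`. If every purity were
`1 / dA`, this sum would be `d (d + 1) / dA = dA dB² + dB`, forcing `dA² = 1`.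
-/

open Finset ComplexConjugate
open scoped InnerProductSpace

/- An operator on `ℂ^κ` is stored as its matrix in `EuclideanSpace ℂ (κ × κ)`, so that the
Hilbert–Schmidt inner product is the Euclidean one: `outer x` is `|x⟩⟨x|`, and `graphVec f` has
entry `1` at each `(p, f p)`, a permutation matrix when `f` is bijective. -/
noncomputable def outer {κ : Type*} (x : EuclideanSpace ℂ κ) : EuclideanSpace ℂ (κ × κ) :=
  WithLp.toLp 2 fun q => x q.1 * conj (x q.2)

noncomputable def graphVec {κ : Type*} [DecidableEq κ] (f : κ → κ) : EuclideanSpace ℂ (κ × κ) :=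
  WithLp.toLp 2 fun q => if q.2 = f q.1 then 1 else 0

noncomputable def tensorSquare {α : Type*} (v : EuclideanSpace ℂ α) : EuclideanSpace ℂ (α × α) :=
  WithLp.toLp 2 fun p => v p.1 * v p.2

section

variable {α κ : Type*} [Fintype α] [Fintype κ]

theorem inner_tensorSquare (u v : EuclideanSpace ℂ α) :
    ⟪tensorSquare u, tensorSquare v⟫_ℂ = ⟪u, v⟫_ℂ ^ 2 := by
  simp only [PiLp.inner_apply, RCLike.inner_apply, tensorSquare, Fintype.sum_prod_type, sq,
    sum_mul_sum, map_mul]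
  exact sum_congr rfl fun _ _ => sum_congr rfl fun _ _ => by ring

theorem norm_tensorSquare (v : EuclideanSpace ℂ α) : ‖tensorSquare v‖ = ‖v‖ ^ 2 := by
  refine (pow_left_inj₀ (norm_nonneg _) (by positivity) two_ne_zero).mp ?_
  rw [@norm_sq_eq_re_inner ℂ, inner_tensorSquare, inner_self_eq_norm_sq_to_K]
  norm_cast

omit [Fintype α] in
theorem tensorSquare_swap (v : EuclideanSpace ℂ α) (p : α × α) :
    tensorSquare v p.swap = tensorSquare v p :=
  mul_comm _ _

theorem inner_outer (x y : EuclideanSpace ℂ κ) :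
    ⟪outer x, outer y⟫_ℂ = ((‖⟪x, y⟫_ℂ‖ ^ 2 : ℝ) : ℂ) := by
  rw [← Complex.normSq_eq_norm_sq, ← Complex.mul_conj]
  simp only [PiLp.inner_apply, RCLike.inner_apply, outer, Fintype.sum_prod_type, map_sum,
    sum_mul_sum, map_mul, Complex.conj_conj]
  exact sum_congr rfl fun _ _ => sum_congr rfl fun _ _ => by ring

variable [DecidableEq κ]

theorem inner_graphVec (f : κ → κ) (X : EuclideanSpace ℂ (κ × κ)) :
    ⟪graphVec f, X⟫_ℂ = ∑ p, X (p, f p) := by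
  simp [PiLp.inner_apply, graphVec, Fintype.sum_prod_type]

theorem inner_graphVec_outer (f : κ → κ) (x : EuclideanSpace ℂ κ) :
    ⟪graphVec f, outer x⟫_ℂ = ∑ p, x p * conj (x (f p)) := by
  simp [inner_graphVec, outer]

theorem inner_graphVec_graphVec (f g : κ → κ) :
    ⟪graphVec f, graphVec g⟫_ℂ = #{p | f p = g p} := by
  rw [inner_graphVec]
  simp [graphVec]

end

noncomputable def identityAddSwap (α : Type*) [DecidableEq α] :
    EuclideanSpace ℂ ((α × α) × (α × α)) :=
  graphVec id + graphVec Prod.swap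

section

variable {α : Type*} [Fintype α] [DecidableEq α]

theorem card_filter_swap_eq_self : #{p : α × α | p.swap = p} = Fintype.card α := by
  rw [← card_univ (α := α)]
  refine card_bij' (fun p _ => p.1) (fun a _ => (a, a)) ?_ ?_ ?_ ?_ <;>
    simp +contextual [Prod.ext_iff, eq_comm]

theorem inner_identityAddSwap_self :
    ⟪identityAddSwap α, identityAddSwap α⟫_ℂ =
      2 * (Fintype.card α : ℂ) ^ 2 + 2 * Fintype.card α := by
  have hswap : #{p : α × α | p = p.swap} = Fintype.card α := by
    simpa only [eq_comm] using card_filter_swap_eq_self (α := α)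
  simp only [identityAddSwap, inner_add_left, inner_add_right, inner_graphVec_graphVec, id,
    filter_true, card_univ, Fintype.card_prod, hswap, card_filter_swap_eq_self]
  push_cast
  ring

theorem inner_identityAddSwap_outer_tensorSquare (v : EuclideanSpace ℂ α) :
    ⟪identityAddSwap α, outer (tensorSquare v)⟫_ℂ = 2 * ((‖v‖ ^ 4 : ℝ) : ℂ) := by
  have hnorm : ∑ p, tensorSquare v p * conj (tensorSquare v p) = ((‖v‖ ^ 4 : ℝ) : ℂ) := by
    have h := inner_self_eq_norm_sq_to_K (𝕜 := ℂ) (tensorSquare v)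
    simp only [PiLp.inner_apply, RCLike.inner_apply, norm_tensorSquare] at h
    rw [h, ← RCLike.ofReal_pow, ← pow_mul]
    rfl
  simp only [identityAddSwap, inner_add_left, inner_graphVec_outer, id, tensorSquare_swap, hnorm]
  ring

end

theorem sum_outer_tensorSquare_eq_identityAddSwap {α ι : Type*} [Fintype α] [DecidableEq α]
    [Fintype ι] (v : ι → EuclideanSpace ℂ α) (hv : ∀ i, ‖v i‖ = 1)
    (hcard : Fintype.card ι = Fintype.card α * (Fintype.card α + 1))
    (hframe : ∑ i, ∑ j, ‖⟪v i, v j⟫_ℂ‖ ^ 4 = 2 * Fintype.card α * (Fintype.card α + 1 : ℝ)) :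
    ∑ i, outer (tensorSquare (v i)) = identityAddSwap α := by
  set S := ∑ i, outer (tensorSquare (v i))
  set R := identityAddSwap α
  have hSS : ‖S‖ ^ 2 = 2 * Fintype.card α * (Fintype.card α + 1 : ℝ) := by
    rw [@norm_sq_eq_re_inner ℂ, ← hframe, sum_inner]
    simp only [S, inner_sum, inner_outer, inner_tensorSquare, norm_pow, ← pow_mul, map_sum]
    rfl
  have hRS : ⟪R, S⟫_ℂ = 2 * Fintype.card ι := by
    simp only [R, S, inner_sum, inner_identityAddSwap_outer_tensorSquare, hv, one_pow,
      Complex.ofReal_one, mul_one, sum_const, card_univ, nsmul_eq_mul]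
    ring
  have hRR : ‖R‖ ^ 2 = 2 * Fintype.card α * (Fintype.card α + 1 : ℝ) := by
    rw [@norm_sq_eq_re_inner ℂ, inner_identityAddSwap_self]
    norm_cast
    rw [RCLike.natCast_re]
    push_cast
    ring
  have hdist : ‖R - S‖ ^ 2 = 0 := by
    rw [@norm_sub_sq ℂ, hSS, hRS, hRR, hcard]
    norm_num
    ring
  exact (sub_eq_zero.mp (norm_eq_zero.mp (pow_eq_zero_iff two_ne_zero |>.mp hdist))).symm

section

variable {𝕜 E ι : Type*} [RCLike 𝕜] [NormedAddCommGroup E] [InnerProductSpace 𝕜 E]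

theorem OrthonormalBasis.sum_norm_inner_pow_four [Fintype ι] [DecidableEq ι]
    (b : OrthonormalBasis ι 𝕜 E) (i : ι) : ∑ k, ‖⟪b i, b k⟫_𝕜‖ ^ 4 = 1 := by
  simp [orthonormal_iff_ite.mp b.orthonormal, apply_ite]

theorem sum_norm_inner_pow_four_of_unbiased {d : ℕ} {b c : OrthonormalBasis (Fin d) 𝕜 E}
    (hbc : ∀ j k, ‖⟪b j, c k⟫_𝕜‖ ^ 2 = 1 / (d : ℝ)) (j : Fin d) :
    ∑ k, ‖⟪b j, c k⟫_𝕜‖ ^ 4 = 1 / (d : ℝ) := by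
  have hd : (d : ℝ) ≠ 0 := Nat.cast_ne_zero.mpr j.pos.ne'
  simp only [show (4 : ℕ) = 2 * 2 from rfl, pow_mul, hbc, sum_const, card_univ, Fintype.card_fin,
    nsmul_eq_mul]
  field_simp

theorem sum_sum_norm_inner_pow_four_of_mub {d : ℕ} (e : Fin (d + 1) → OrthonormalBasis (Fin d) 𝕜 E)
    (hmub : ∀ m n, m ≠ n → ∀ j k, ‖⟪e m j, e n k⟫_𝕜‖ ^ 2 = 1 / (d : ℝ)) :
    ∑ i : Fin (d + 1) × Fin d, ∑ i' : Fin (d + 1) × Fin d, ‖⟪e i.1 i.2, e i'.1 i'.2⟫_𝕜‖ ^ 4 =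
      2 * d * (d + 1) := by
  have hrow (m : Fin (d + 1)) (j : Fin d) :
      ∑ i' : Fin (d + 1) × Fin d, ‖⟪e m j, e i'.1 i'.2⟫_𝕜‖ ^ 4 = 2 := by
    have hd : (d : ℝ) ≠ 0 := Nat.cast_ne_zero.mpr j.pos.ne'
    have hblock (n : Fin (d + 1)) :
        ∑ k, ‖⟪e m j, e n k⟫_𝕜‖ ^ 4 = if m = n then 1 else 1 / (d : ℝ) := by
      split_ifs with h
      · exact h ▸ (e m).sum_norm_inner_pow_four j
      · exact sum_norm_inner_pow_four_of_unbiased (hmub m n h) j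
    rw [Fintype.sum_prod_type, sum_congr rfl fun n _ => hblock n,
      Fintype.sum_eq_add_sum_compl m, if_pos rfl,
      sum_congr rfl fun n hn => if_neg (Ne.symm (by simpa using hn))]
    simp only [sum_const, card_compl, Fintype.card_fin, card_singleton, add_tsub_cancel_right,
      nsmul_eq_mul]
    field_simp
    ring
  simp only [hrow, sum_const, card_univ, Fintype.card_prod, Fintype.card_fin, nsmul_eq_mul]
  push_cast
  ring

end

-- `graphVec swapLeft` is the partial swap `SWAP_A ⊗ I_B` on two copies of `A ⊗ B`.
def swapLeft {α β : Type*} (p : (α × β) × (α × β)) : (α × β) × (α × β) :=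
  ((p.2.1, p.1.2), (p.1.1, p.2.2))

theorem purity_eq_inner_graphVec_swapLeft {dA dB : ℕ} (ψ : EuclideanSpace ℂ (Fin dA × Fin dB)) :
    (purity ψ : ℂ) = ⟪graphVec swapLeft, outer (tensorSquare ψ)⟫_ℂ := by
  rw [inner_graphVec_outer, purity]
  push_cast
  simp only [← Complex.mul_conj', map_sum, sum_mul_sum, map_mul,
    Complex.conj_conj, Fintype.sum_prod_type, tensorSquare, swapLeft, PiLp.toLp_apply]
  refine sum_congr rfl fun a _ => ?_
  rw [sum_comm]
  refine sum_congr rfl fun b _ => sum_congr rfl fun a' _ => sum_congr rfl fun b' _ => ?_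
  ring

theorem inner_graphVec_swapLeft_identityAddSwap {α β : Type*} [Fintype α] [Fintype β]
    [DecidableEq α] [DecidableEq β] :
    ⟪graphVec swapLeft, identityAddSwap (α × β)⟫_ℂ =
      (Fintype.card α : ℂ) ^ 2 * Fintype.card β + Fintype.card α * (Fintype.card β : ℂ) ^ 2 := by
  rw [inner_graphVec]
  simp only [identityAddSwap, graphVec, id_eq, Prod.ext_iff, ite_and, Prod.fst_swap,
    Prod.snd_swap, swapLeft, PiLp.add_apply, ↓reduceIte, sum_add_distrib, Fintype.sum_prod_type,
    sum_ite_irrel, sum_boole, filter_const, sum_const_zero, sum_ite_eq', mem_univ, card_univ,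
    sum_const, Fintype.card_prod, nsmul_eq_mul, Nat.cast_mul, sum_ite_eq, mul_one]
  ring

theorem sum_purity_of_sum_outer_tensorSquare_eq_identityAddSwap {dA dB : ℕ} {ι : Type*} [Fintype ι]
    (v : ι → EuclideanSpace ℂ (Fin dA × Fin dB))
    (hv : ∑ i, outer (tensorSquare (v i)) = identityAddSwap _) :
    ∑ i, purity (v i) = (dA : ℝ) ^ 2 * dB + dA * (dB : ℝ) ^ 2 := by
  apply Complex.ofReal_injective
  push_cast
  simp only [purity_eq_inner_graphVec_swapLeft, ← inner_sum, hv,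
    inner_graphVec_swapLeft_identityAddSwap, Fintype.card_fin]

theorem complete_mub_not_all_maximally_entangled (dA dB : ℕ) (hA : 2 ≤ dA) (hAB : dA ≤ dB)
    (e : Fin (dA * dB + 1) →
      OrthonormalBasis (Fin (dA * dB)) ℂ (EuclideanSpace ℂ (Fin dA × Fin dB)))
    (hmub : ∀ m n : Fin (dA * dB + 1), m ≠ n →
      ∀ j k : Fin (dA * dB),
        ‖(inner ℂ (e m j) (e n k) : ℂ)‖ ^ 2 = 1 / (dA * dB : ℝ)) :
    ∃ (m : Fin (dA * dB + 1)) (j : Fin (dA * dB)), purity (e m j) ≠ 1 / (dA : ℝ) := by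
  by_contra! hmax
  have hcard : Fintype.card (Fin dA × Fin dB) = dA * dB := by simp
  have hdesign : ∑ i : Fin (dA * dB + 1) × Fin (dA * dB), outer (tensorSquare (e i.1 i.2)) =
      identityAddSwap _ := by
    refine sum_outer_tensorSquare_eq_identityAddSwap _ (fun i => (e i.1).norm_eq_one i.2)
      (by simp [mul_comm]) ?_
    rw [hcard, sum_sum_norm_inner_pow_four_of_mub e (by exact_mod_cast hmub)]
  have hsum := sum_purity_of_sum_outer_tensorSquare_eq_identityAddSwap _ hdesign
  simp only [hmax, sum_const, card_univ, Fintype.card_prod, Fintype.card_fin, nsmul_eq_mul] at hsum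
  have hA' : (2 : ℝ) ≤ dA := by exact_mod_cast hA
  have hB' : (2 : ℝ) ≤ dB := by exact_mod_cast hA.trans hAB
  field_simp at hsum
  push_cast at hsum
  have hkey : (dA * dB : ℝ) * ((dA : ℝ) ^ 2 - 1) = 0 := by linear_combination -hsum
  have hpos : (0 : ℝ) < dA * dB * ((dA : ℝ) ^ 2 - 1) := by
    have : (0 : ℝ) < (dA : ℝ) ^ 2 - 1 := by nlinarith
    positivity
  exact hpos.ne' hkey
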